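/- For a prime p > 2 and a positive integer t, the ratio fun(p^t)/fun(p) is a power of p, where fun denotes the fundamental period (rank of apparition). -/

import Mathlib

noncomputable def fundPeriod (K : ℕ) : ℕ := sInf {k : ℕ | 0 < k ∧ K ∣ Nat.fib k}

/-!
Since `F(m + n) = F(m - 1) F(n) + F(m) F(n + 1)`, induction on `n` gives
`F(n m) ≡ n F(m - 1)^(n - 1) F(m) [mod F(m)^2]`; so `p^s ∣ F(m)` with `s ≥ 1` lifts to
`p^(s + 1) ∣ F(p m)`, and `p^t ∣ F(d p^(t - 1))` for `d = fun(p)`. By strong divisibility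
`K ∣ F(n) ↔ fun(K) ∣ n`, so `fun(p^t)` is a multiple of `d` dividing `d p^(t - 1)`.
Here `fun(K)` exists because `(a, b) ↦ (b, a + b)` permutes `(ℤ/K)²`, so `(F(n), F(n + 1))`
returns to `(0, 1)` modulo `K`.
-/

namespace Int

theorem fib_mul_modEq_fib_sq (m : ℤ) (n : ℕ) :
    fib ((n + 1) * m - 1) ≡ fib (m - 1) ^ (n + 1) [ZMOD fib m ^ 2] ∧
      fib ((n + 1) * m) ≡ (n + 1) * fib (m - 1) ^ n * fib m [ZMOD fib m ^ 2] := by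
  induction n with
  | zero => simp [Int.ModEq.refl]
  | succ n ih =>
    have hsucc : fib (m + 1) = fib (m - 1) + fib m := by
      convert fib_add_two (m - 1) using 2 <;> ring_nf
    have hsub : fib ((n + 1 + 1) * m - 1) =
        fib ((n + 1) * m - 1) * fib (m - 1) + fib ((n + 1) * m) * fib m := by
      rw [show (n + 1 + 1) * m - 1 = (n + 1) * m + (m - 1) by ring, fib_add, sub_add_cancel]
    have hadd : fib ((n + 1 + 1) * m) =
        fib ((n + 1) * m - 1) * fib m + fib ((n + 1) * m) * (fib (m - 1) + fib m) := by
      rw [show (n + 1 + 1) * m = (n + 1) * m + m by ring, fib_add, hsucc]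
    push_cast
    rw [hsub, hadd]
    obtain ⟨hprev, hcur⟩ := ih
    generalize fib (m - 1) = c, fib m = f at *
    have hf2 : f ^ 2 ≡ 0 [ZMOD f ^ 2] := Int.emod_self
    constructor
    · calc _ ≡ c ^ (n + 1) * c + (n + 1) * c ^ n * f * f [ZMOD f ^ 2] := by gcongr
        _ = c ^ (n + 1 + 1) + (n + 1) * c ^ n * f ^ 2 := by ring
        _ ≡ c ^ (n + 1 + 1) + (n + 1) * c ^ n * 0 [ZMOD f ^ 2] := by gcongr
        _ = _ := by ring
    · calc _ ≡ c ^ (n + 1) * f + (n + 1) * c ^ n * f * (c + f) [ZMOD f ^ 2] := by gcongr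
        _ = (n + 1 + 1) * c ^ (n + 1) * f + (n + 1) * c ^ n * f ^ 2 := by ring
        _ ≡ (n + 1 + 1) * c ^ (n + 1) * f + (n + 1) * c ^ n * 0 [ZMOD f ^ 2] := by gcongr
        _ = _ := by ring

end Int

namespace Nat

theorem pow_succ_dvd_fib_mul {p s m : ℕ} (hs : s ≠ 0) (h : p ^ s ∣ fib m) :
    p ^ (s + 1) ∣ fib (p * m) := by
  rcases p with _ | n
  · simp
  rw [← Int.natCast_dvd_natCast, ← Int.fib_natCast] at h ⊢
  push_cast at h ⊢
  have hsq : ((n : ℤ) + 1) ^ (s + 1) ∣ Int.fib m ^ 2 :=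
    calc _ ∣ ((n : ℤ) + 1) ^ (s * 2) := pow_dvd_pow _ (by omega)
      _ ∣ Int.fib m ^ 2 := by rw [pow_mul]; exact pow_dvd_pow_of_dvd h 2
  rw [((Int.fib_mul_modEq_fib_sq m n).2.of_dvd hsq).dvd_iff, _root_.pow_succ']
  exact mul_dvd_mul (dvd_mul_right _ _) h

theorem pow_succ_dvd_fib_mul_pow {p m : ℕ} (h : p ∣ fib m) (j : ℕ) :
    p ^ (j + 1) ∣ fib (m * p ^ j) := by
  induction j with
  | zero => simpa using h
  | succ j ih =>
    rw [pow_succ p j, ← mul_assoc, mul_comm]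
    exact pow_succ_dvd_fib_mul j.succ_ne_zero ih

theorem exists_pos_dvd_fib (K : ℕ) [NeZero K] : ∃ k, 0 < k ∧ K ∣ fib k := by
  let σ : Equiv.Perm (ZMod K × ZMod K) :=
    { toFun x := (x.2, x.1 + x.2)
      invFun x := (x.2 - x.1, x.1)
      left_inv x := by simp
      right_inv x := by simp }
  have hσ (n : ℕ) : (σ ^ n) (0, 1) = ((fib n : ZMod K), (fib (n + 1) : ZMod K)) := by
    induction n with
    | zero => simp
    | succ n ih => rw [_root_.pow_succ', Equiv.Perm.mul_apply, ih]; simp [σ, fib_add_two]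
  refine ⟨orderOf σ, orderOf_pos σ, (ZMod.natCast_eq_zero_iff _ _).1 ?_⟩
  simpa [pow_orderOf_eq_one] using (congrArg Prod.fst (hσ (orderOf σ))).symm

end Nat

theorem fundPeriod_mem (K : ℕ) [NeZero K] : fundPeriod K ∈ {k : ℕ | 0 < k ∧ K ∣ Nat.fib k} :=
  Nat.sInf_mem (Nat.exists_pos_dvd_fib K)

theorem dvd_fib_iff_fundPeriod_dvd {K : ℕ} [NeZero K] {n : ℕ} :
    K ∣ Nat.fib n ↔ fundPeriod K ∣ n := by
  obtain ⟨hpos, hdvd⟩ := fundPeriod_mem K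
  refine ⟨fun h ↦ ?_, fun h ↦ hdvd.trans (Nat.fib_dvd _ _ h)⟩
  have hgcd : K ∣ Nat.fib (Nat.gcd (fundPeriod K) n) := by
    rw [Nat.fib_gcd]; exact Nat.dvd_gcd hdvd h
  have hle : fundPeriod K ≤ Nat.gcd (fundPeriod K) n :=
    Nat.sInf_le ⟨Nat.gcd_pos_of_pos_left n hpos, hgcd⟩
  exact Nat.gcd_eq_left_iff_dvd.1 <| le_antisymm (Nat.le_of_dvd hpos (Nat.gcd_dvd_left _ _)) hle

theorem fundPeriod_prime_pow_ratio_general (p : ℕ) (hp : p.Prime) (t : ℕ) (ht : 0 < t) :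
    ∃ j : ℕ, fundPeriod (p ^ t) = fundPeriod p * p ^ j := by
  have : NeZero p := ⟨hp.ne_zero⟩
  obtain ⟨hd_pos, hd⟩ := fundPeriod_mem p
  obtain ⟨q, hq⟩ : fundPeriod p ∣ fundPeriod (p ^ t) :=
    dvd_fib_iff_fundPeriod_dvd.1 ((dvd_pow_self p ht.ne').trans (fundPeriod_mem _).2)
  have hlift : fundPeriod (p ^ t) ∣ fundPeriod p * p ^ (t - 1) := by
    apply dvd_fib_iff_fundPeriod_dvd.1
    simpa [Nat.sub_add_cancel ht] using Nat.pow_succ_dvd_fib_mul_pow hd (t - 1)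
  rw [hq] at hlift ⊢
  obtain ⟨j, -, rfl⟩ := (Nat.dvd_prime_pow hp).1 (Nat.dvd_of_mul_dvd_mul_left hd_pos hlift)
  exact ⟨j, rfl⟩

theorem fundPeriod_prime_pow_ratio (p : ℕ) (hp : p.Prime) (hp2 : 2 < p) (t : ℕ) (ht : 0 < t) :
    ∃ j : ℕ, fundPeriod (p ^ t) = fundPeriod p * p ^ j :=
  fundPeriod_prime_pow_ratio_general p hp t ht
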